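/- Let ε, α > 0, M ≥ 0 and δt > 0. Under the same hypotheses as the discrete energy law for Scheme 1 — smooth Ω-periodic φ^{n-1}, φ^n, φ^{n+1}, U^n, U^{n+1}, w, ψ^n, ψ^{n+1} with φ* = (3/2)φ^n - (1/2)φ^{n-1}, satisfying (φ^{n+1} - φ^n)/δt = M Δw, w = -ε² Δ((φ^{n+1}+φ^n)/2) + φ* (U^{n+1}+U^n)/2 + α (ψ^{n+1}+ψ^n)/2, U^{n+1} - U^n = 2 φ* (φ^{n+1} - φ^n), and -Δψ^k = φ^k - φ̄^k, ∫_Ω ψ^k dx = 0 for k = n, n+1 — we have E(φ^{n+1}, U^{n+1}, ψ^{n+1}) ≤ E(φ^n, U^n, ψ^n), where E(φ,U,ψ) = (ε²/2)‖∇φ‖² + (1/4)‖U‖² + (α/2)‖∇ψ‖²; i.e., the scheme is unconditionally energy stable for every time step δt > 0. -/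

import Mathlib

open MeasureTheory Real Set
open scoped RealInnerProductSpace

noncomputable section
namespace PFBCP

/-- Euclidean space ℝ^d. -/
abbrev Eu (d : ℕ) := EuclideanSpace ℝ (Fin d)

/-- The periodic box Ω = [0, 2π]^d. -/
def Box (d : ℕ) : Set (Eu d) := {x | ∀ i, x i ∈ Icc (0:ℝ) (2 * π)}

/-- i-th coordinate unit vector. -/
def uvec (d : ℕ) (i : Fin d) : Eu d := EuclideanSpace.single i 1

/-- Ω-periodicity: 2π-periodic in each coordinate direction. -/
def OmegaPeriodic {d : ℕ} {F : Type*} [NormedAddCommGroup F] (f : Eu d → F) : Prop :=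
  ∀ (x : Eu d) (i : Fin d), f (x + (2 * π) • uvec d i) = f x

/-- Laplacian (componentwise for vector-valued functions). -/
def lap {d : ℕ} {F : Type*} [NormedAddCommGroup F] [NormedSpace ℝ F]
    (f : Eu d → F) (x : Eu d) : F :=
  ∑ i, fderiv ℝ (fun y => fderiv ℝ f y (uvec d i)) x (uvec d i)

/-- Divergence of a vector field. -/
def dvg {d : ℕ} (u : Eu d → Eu d) (x : Eu d) : ℝ :=
  ∑ i, fderiv ℝ u x (uvec d i) i

/-- (u·∇)v, the directional derivative of `v` along `u`. -/
def conv {d : ℕ} (u v : Eu d → Eu d) (x : Eu d) : Eu d :=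
  fderiv ℝ v x (u x)

/-- Squared Frobenius norm of the gradient of a vector field. -/
def gradVSq {d : ℕ} (u : Eu d → Eu d) (x : Eu d) : ℝ :=
  ∑ i, ∑ j, (fderiv ℝ u x (uvec d i) j) ^ 2

/-- Mean value of a scalar function over the box Ω. -/
def avg {d : ℕ} (f : Eu d → ℝ) : ℝ :=
  (volume (Box d)).toReal⁻¹ * ∫ x in Box d, f x


/-- Discrete energy `E(φ,U,ψ) = (ε²/2)‖∇φ‖² + (1/4)‖U‖² + (α/2)‖∇ψ‖²`. -/
def Edisc {d : ℕ} (ε α : ℝ) (φ U ψ : Eu d → ℝ) : ℝ :=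
  ε ^ 2 / 2 * (∫ x in Box d, ‖gradient φ x‖ ^ 2)
    + 1 / 4 * (∫ x in Box d, (U x) ^ 2)
    + α / 2 * (∫ x in Box d, ‖gradient ψ x‖ ^ 2)

-- auxiliary lemmas (to be inserted above the theorem)
section Aux

variable {d : ℕ}

def eL (d : ℕ) : Eu d ≃L[ℝ] (Fin d → ℝ) := PiLp.continuousLinearEquiv 2 ℝ _

lemma box_eq (d : ℕ) : Box d = (eL d) ⁻¹' (Icc 0 (fun _ => 2*π)) := by
  ext x; simp [Box, Set.mem_Icc, Pi.le_def, eL]; exact forall_and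

lemma isCompact_box (d : ℕ) : IsCompact (Box d) := by
  rw [box_eq]; exact ((eL d).toHomeomorph.isCompact_preimage).2 isCompact_Icc

lemma measurableSet_box (d : ℕ) : MeasurableSet (Box d) := by
  rw [box_eq]; exact measurableSet_Icc.preimage (eL d).continuous.measurable

lemma integrableOn_box {f : Eu d → ℝ} (hf : Continuous f) : IntegrableOn f (Box d) :=
  hf.continuousOn.integrableOn_compact (isCompact_box d)

lemma insertNth_shift {n : ℕ} (i : Fin (n+1)) (y : Fin n → ℝ) :
    (i.insertNth ((2:ℝ)*π) y : Fin (n+1) → ℝ)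
      = i.insertNth (0:ℝ) y + (2*π) • Pi.single (M := fun _ : Fin (n+1) => ℝ) i 1 := by
  funext j
  rcases eq_or_ne j i with rfl | hj
  · simp
  · obtain ⟨k, rfl⟩ := Fin.exists_succAbove_eq hj
    simp [Fin.insertNth_apply_succAbove, Pi.single_eq_of_ne (Fin.succAbove_ne i k)]

lemma integral_div_zero (hd : d ≠ 0) (f : Fin d → Eu d → ℝ)
    (hs : ∀ i, ContDiff ℝ (⊤ : ℕ∞) (f i)) (hp : ∀ i, OmegaPeriodic (f i)) :
    ∫ x in Box d, ∑ i, fderiv ℝ (f i) x (uvec d i) = 0 := by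
  obtain ⟨n, rfl⟩ : ∃ n, d = n + 1 :=
    ⟨d - 1, (Nat.succ_pred_eq_of_pos (Nat.pos_of_ne_zero hd)).symm⟩
  have hle : (0 : Fin (n+1) → ℝ) ≤ (fun _ => 2*π) := fun i => by positivity
  have hder : ∀ (x : Fin n.succ → ℝ) (i : Fin n.succ),
      HasFDerivAt (fun x => f i ((eL n.succ).symm x))
        ((fderiv ℝ (f i) ((eL n.succ).symm x)).comp
          ((eL n.succ).symm : (Fin n.succ → ℝ) →L[ℝ] Eu n.succ)) x := fun x i =>
    (((hs i).differentiable (by simp)) _).hasFDerivAt.comp x (eL n.succ).symm.hasFDerivAt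
  have hcont : ∀ i, Continuous (fun x => fderiv ℝ (f i) x (uvec n.succ i)) :=
    fun i => (((hs i).fderiv_right (m := (⊤ : ℕ∞)) (by simp)).continuous).clm_apply continuous_const
  have hdivcont : Continuous (fun x : Fin n.succ → ℝ =>
      ∑ i, fderiv ℝ (f i) ((eL n.succ).symm x) (uvec n.succ i)) :=
    continuous_finset_sum _ fun i _ => (hcont i).comp (eL n.succ).symm.continuous
  have main := integral_divergence_of_hasFDerivAt_off_countable'
    0 (fun _ => 2*π) hle
    (fun i x => f i ((eL n.succ).symm x))
    (fun i x => (fderiv ℝ (f i) ((eL n.succ).symm x)).comp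
      ((eL n.succ).symm : (Fin n.succ → ℝ) →L[ℝ] Eu n.succ))
    ∅ Set.countable_empty
    (fun i => ((hs i).continuous.comp (eL n.succ).symm.continuous).continuousOn)
    (fun x _ i => hder x i)
    (hdivcont.continuousOn.integrableOn_compact isCompact_Icc)
  rw [Finset.sum_eq_zero] at main
  swap
  · intro i _
    rw [sub_eq_zero]
    refine setIntegral_congr_fun measurableSet_Icc (fun y _ => ?_)
    show f i ((eL n.succ).symm (i.insertNth ((2:ℝ)*π) y))
        = f i ((eL n.succ).symm (i.insertNth (0:ℝ) y))
    rw [insertNth_shift, map_add, _root_.map_smul]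
    exact hp i _ i
  have hmp := EuclideanSpace.volume_preserving_symm_measurableEquiv_toLp (Fin n.succ)
  have hemb := (MeasurableEquiv.toLp 2 (Fin n.succ → ℝ)).symm.measurableEmbedding
  have htrans := hmp.setIntegral_preimage_emb hemb
    (fun x => ∑ i, fderiv ℝ (f i) ((eL n.succ).symm x) (uvec n.succ i))
    (Icc 0 (fun _ => 2*π))
  have key : ∫ x in (⇑(MeasurableEquiv.toLp 2 (Fin n.succ → ℝ)).symm ⁻¹' (Icc 0 (fun _ => 2*π))),
      ∑ i, fderiv ℝ (f i) x (uvec n.succ i) = 0 := htrans.trans main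
  rw [show Box n.succ = ⇑(MeasurableEquiv.toLp 2 (Fin n.succ → ℝ)).symm ⁻¹' (Icc 0 (fun _ => 2*π))
    from by rw [box_eq]; rfl]
  exact key

lemma fderiv_omegaPeriodic {F : Type*} [NormedAddCommGroup F] [NormedSpace ℝ F]
    {f : Eu d → F} (hf : Differentiable ℝ f) (hp : OmegaPeriodic f) :
    OmegaPeriodic (fderiv ℝ f) := by
  intro x i
  have h1 : HasFDerivAt (fun y : Eu d => y + (2*π) • uvec d i)
      (ContinuousLinearMap.id ℝ (Eu d)) x := (hasFDerivAt_id x).add_const _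
  have h2 := (hf (x + (2*π) • uvec d i)).hasFDerivAt.comp x h1
  have h3 : (f ∘ fun y : Eu d => y + (2*π) • uvec d i) = f := funext fun y => hp y i
  rw [h3, ContinuousLinearMap.comp_id] at h2
  exact (h2.fderiv).symm

lemma pderiv_smooth {f : Eu d → ℝ} (hf : ContDiff ℝ (⊤ : ℕ∞) f) (i : Fin d) :
    ContDiff ℝ (⊤ : ℕ∞) (fun x => fderiv ℝ f x (uvec d i)) :=
  (hf.fderiv_right (m := (⊤ : ℕ∞)) (by simp)).clm_apply contDiff_const

lemma lap_continuous {f : Eu d → ℝ} (hf : ContDiff ℝ (⊤ : ℕ∞) f) :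
    Continuous (lap f) := by
  refine continuous_finset_sum _ fun i _ => ?_
  exact (((pderiv_smooth hf i).fderiv_right (m := (⊤ : ℕ∞)) (by simp)).continuous).clm_apply
    continuous_const

lemma gradSqSum_continuous {f g : Eu d → ℝ} (hf : ContDiff ℝ (⊤ : ℕ∞) f)
    (hg : ContDiff ℝ (⊤ : ℕ∞) g) :
    Continuous (fun x => ∑ i, fderiv ℝ f x (uvec d i) * fderiv ℝ g x (uvec d i)) :=
  continuous_finset_sum _ fun i _ =>
    ((pderiv_smooth hf i).continuous).mul ((pderiv_smooth hg i).continuous)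

lemma gradsq_continuous {f : Eu d → ℝ} (hf : ContDiff ℝ (⊤ : ℕ∞) f) :
    Continuous (fun x => ∑ i, (fderiv ℝ f x (uvec d i))^2) :=
  continuous_finset_sum _ fun i _ => ((pderiv_smooth hf i).continuous).pow 2

lemma ibp (hd : d ≠ 0) {f g : Eu d → ℝ} (hf : ContDiff ℝ (⊤ : ℕ∞) f)
    (hg : ContDiff ℝ (⊤ : ℕ∞) g) (hfp : OmegaPeriodic f) (hgp : OmegaPeriodic g) :
    ∫ x in Box d, f x * lap g x
      = -∫ x in Box d, ∑ i, fderiv ℝ f x (uvec d i) * fderiv ℝ g x (uvec d i) := by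
  have hFs : ∀ i : Fin d, ContDiff ℝ (⊤ : ℕ∞) (fun y => f y * fderiv ℝ g y (uvec d i)) :=
    fun i => hf.mul (pderiv_smooth hg i)
  have hFp : ∀ i : Fin d, OmegaPeriodic (fun y => f y * fderiv ℝ g y (uvec d i)) :=
    fun i x j => by
      dsimp only; rw [hfp x j, fderiv_omegaPeriodic (hg.differentiable (by simp)) hgp x j]
  have hzero := integral_div_zero hd (fun i y => f y * fderiv ℝ g y (uvec d i)) hFs hFp
  have hpt : ∀ x : Eu d,
      ∑ i, fderiv ℝ (fun y => f y * fderiv ℝ g y (uvec d i)) x (uvec d i)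
        = (∑ i, fderiv ℝ f x (uvec d i) * fderiv ℝ g x (uvec d i)) + f x * lap g x := by
    intro x
    have : ∀ i : Fin d,
        fderiv ℝ (fun y => f y * fderiv ℝ g y (uvec d i)) x (uvec d i)
          = fderiv ℝ f x (uvec d i) * fderiv ℝ g x (uvec d i)
            + f x * fderiv ℝ (fun y => fderiv ℝ g y (uvec d i)) x (uvec d i) := by
      intro i
      rw [fderiv_fun_mul ((hf.differentiable (by simp)) x)
        (((pderiv_smooth hg i).differentiable (by simp)) x)]
      simp only [ContinuousLinearMap.add_apply, ContinuousLinearMap.smul_apply, smul_eq_mul]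
      ring
    rw [Finset.sum_congr rfl fun i _ => this i, Finset.sum_add_distrib, lap,
      Finset.mul_sum]
  rw [setIntegral_congr_fun (measurableSet_box d) (fun x _ => hpt x),
    integral_add (integrableOn_box (gradSqSum_continuous hf hg))
      (integrableOn_box (f := fun x => f x * lap g x) ((hf.continuous).mul (lap_continuous hg)))] at hzero
  linarith

lemma grad_normsq (f : Eu d → ℝ) (x : Eu d) :
    ‖gradient f x‖^2 = ∑ i, (fderiv ℝ f x (uvec d i))^2 := by
  rw [← real_inner_self_eq_norm_sq]
  have h : ∀ i, gradient f x i = fderiv ℝ f x (uvec d i) := by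
    intro i
    have h1 : ⟪gradient f x, uvec d i⟫ = fderiv ℝ f x (uvec d i) := by
      simp [gradient, InnerProductSpace.toDual_symm_apply]
    rw [← h1, uvec, EuclideanSpace.inner_single_right]; simp
  rw [PiLp.inner_apply]; simp [h, sq]

lemma fderiv_sub_apply {f g : Eu d → ℝ} (hf : ContDiff ℝ (⊤ : ℕ∞) f) (hg : ContDiff ℝ (⊤ : ℕ∞) g)
    (x v : Eu d) :
    fderiv ℝ (fun y => f y - g y) x v = fderiv ℝ f x v - fderiv ℝ g x v := by
  rw [fderiv_fun_sub ((hf.differentiable (by simp)) x) ((hg.differentiable (by simp)) x)]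
  simp

lemma fderiv_avg_apply {f g : Eu d → ℝ} (hf : ContDiff ℝ (⊤ : ℕ∞) f) (hg : ContDiff ℝ (⊤ : ℕ∞) g)
    (x v : Eu d) :
    fderiv ℝ (fun y => (f y + g y)/2) x v = (fderiv ℝ f x v + fderiv ℝ g x v)/2 := by
  have h1 : (fun y => (f y + g y)/2) = fun y => (2:ℝ)⁻¹ * (f y + g y) := by
    funext y; ring
  rw [h1, fderiv_const_mul (a := fun y => f y + g y)
      (((hf.differentiable (by simp)) x).add ((hg.differentiable (by simp)) x)),
    fderiv_fun_add ((hf.differentiable (by simp)) x) ((hg.differentiable (by simp)) x)]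
  simp; ring

end Aux

/-- Unconditional energy stability of Scheme 1 (Theorem 3.1). -/
theorem scheme1_unconditional_stability {d : ℕ} (hd : d = 2 ∨ d = 3)
    (ε α M δt : ℝ) (hε : 0 < ε) (hα : 0 < α) (hM : 0 ≤ M) (hδt : 0 < δt)
    (φm φ0 φ1 U0 U1 w ψ0 ψ1 : Eu d → ℝ)
    (hφms : ContDiff ℝ (⊤ : ℕ∞) φm) (hφ0s : ContDiff ℝ (⊤ : ℕ∞) φ0) (hφ1s : ContDiff ℝ (⊤ : ℕ∞) φ1)
    (hU0s : ContDiff ℝ (⊤ : ℕ∞) U0) (hU1s : ContDiff ℝ (⊤ : ℕ∞) U1) (hws : ContDiff ℝ (⊤ : ℕ∞) w)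
    (hψ0s : ContDiff ℝ (⊤ : ℕ∞) ψ0) (hψ1s : ContDiff ℝ (⊤ : ℕ∞) ψ1)
    (hφmp : OmegaPeriodic φm) (hφ0p : OmegaPeriodic φ0) (hφ1p : OmegaPeriodic φ1)
    (hU0p : OmegaPeriodic U0) (hU1p : OmegaPeriodic U1) (hwp : OmegaPeriodic w)
    (hψ0p : OmegaPeriodic ψ0) (hψ1p : OmegaPeriodic ψ1)
    (heq1 : ∀ x : Eu d, (φ1 x - φ0 x) / δt = M * lap w x)
    (heq2 : ∀ x : Eu d,
      w x = -ε ^ 2 * lap (fun y => (φ1 y + φ0 y) / 2) x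
        + (3 / 2 * φ0 x - 1 / 2 * φm x) * ((U1 x + U0 x) / 2)
        + α * ((ψ1 x + ψ0 x) / 2))
    (heq3 : ∀ x : Eu d,
      U1 x - U0 x = 2 * (3 / 2 * φ0 x - 1 / 2 * φm x) * (φ1 x - φ0 x))
    (hψeq0 : ∀ x : Eu d, -lap ψ0 x = φ0 x - avg φ0)
    (hψeq1 : ∀ x : Eu d, -lap ψ1 x = φ1 x - avg φ1)
    (hψmean0 : (∫ x in Box d, ψ0 x) = 0)
    (hψmean1 : (∫ x in Box d, ψ1 x) = 0) :
    Edisc ε α φ1 U1 ψ1 ≤ Edisc ε α φ0 U0 ψ0 := by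
  have hd0 : d ≠ 0 := by rcases hd with rfl | rfl <;> simp
  have hB := measurableSet_box d
  have cφ1 := hφ1s.continuous; have cφ0 := hφ0s.continuous; have cφm := hφms.continuous
  have cU1 := hU1s.continuous; have cU0 := hU0s.continuous
  have cψ1 := hψ1s.continuous; have cψ0 := hψ0s.continuous
  have hgavs : ContDiff ℝ (⊤ : ℕ∞) (fun y => (φ1 y + φ0 y)/2) := (hφ1s.add hφ0s).div_const 2
  have hgavp : OmegaPeriodic (fun y => (φ1 y + φ0 y)/2) := fun x i => by
    dsimp only; rw [hφ1p x i, hφ0p x i]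
  have hdms : ContDiff ℝ (⊤ : ℕ∞) (fun y => φ1 y - φ0 y) := hφ1s.sub hφ0s
  have hdmp : OmegaPeriodic (fun y => φ1 y - φ0 y) := fun x i => by
    dsimp only; rw [hφ1p x i, hφ0p x i]
  have hψas : ContDiff ℝ (⊤ : ℕ∞) (fun y => (ψ1 y + ψ0 y)/2) := (hψ1s.add hψ0s).div_const 2
  have hψap : OmegaPeriodic (fun y => (ψ1 y + ψ0 y)/2) := fun x i => by
    dsimp only; rw [hψ1p x i, hψ0p x i]
  -- Step 1 : the basic dissipation inequality
  have hA1 : ∫ x in Box d, (φ1 x - φ0 x) * w x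
      = (δt * M) * ∫ x in Box d, w x * lap w x := by
    rw [← integral_const_mul]
    refine setIntegral_congr_fun hB (fun x _ => ?_)
    have h := heq1 x
    rw [div_eq_iff (ne_of_gt hδt)] at h
    rw [h]; ring
  have hA2 : ∫ x in Box d, w x * lap w x
      = -∫ x in Box d, ∑ i, fderiv ℝ w x (uvec d i) * fderiv ℝ w x (uvec d i) :=
    ibp hd0 hws hws hwp hwp
  have hPnn : 0 ≤ ∫ x in Box d, ∑ i, fderiv ℝ w x (uvec d i) * fderiv ℝ w x (uvec d i) :=
    setIntegral_nonneg hB fun x _ => Finset.sum_nonneg fun i _ => mul_self_nonneg _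
  have hAle : ∫ x in Box d, (φ1 x - φ0 x) * w x ≤ 0 := by
    rw [hA1, hA2, mul_neg]
    exact neg_nonpos_of_nonneg (mul_nonneg (mul_nonneg hδt.le hM) hPnn)
  -- Step 2 : split the integral using the chemical potential
  have hI1c : Continuous (fun x => (φ1 x - φ0 x) * (-ε^2 * lap (fun y => (φ1 y + φ0 y)/2) x)) :=
    (cφ1.sub cφ0).mul (continuous_const.mul (lap_continuous hgavs))
  have hI2c : Continuous (fun x =>
      (φ1 x - φ0 x) * ((3/2 * φ0 x - 1/2 * φm x) * ((U1 x + U0 x)/2))) :=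
    (cφ1.sub cφ0).mul
      (((continuous_const.mul cφ0).sub (continuous_const.mul cφm)).mul
        ((cU1.add cU0).div_const 2))
  have hI3c : Continuous (fun x => (φ1 x - φ0 x) * (α * ((ψ1 x + ψ0 x)/2))) :=
    (cφ1.sub cφ0).mul (continuous_const.mul ((cψ1.add cψ0).div_const 2))
  have hsplit : ∫ x in Box d, (φ1 x - φ0 x) * w x
      = (∫ x in Box d, (φ1 x - φ0 x) * (-ε^2 * lap (fun y => (φ1 y + φ0 y)/2) x))
        + ((∫ x in Box d, (φ1 x - φ0 x) * ((3/2 * φ0 x - 1/2 * φm x) * ((U1 x + U0 x)/2)))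
          + (∫ x in Box d, (φ1 x - φ0 x) * (α * ((ψ1 x + ψ0 x)/2)))) := by
    have hpt : ∀ x ∈ Box d, (φ1 x - φ0 x) * w x
        = (φ1 x - φ0 x) * (-ε^2 * lap (fun y => (φ1 y + φ0 y)/2) x)
          + ((φ1 x - φ0 x) * ((3/2 * φ0 x - 1/2 * φm x) * ((U1 x + U0 x)/2))
            + (φ1 x - φ0 x) * (α * ((ψ1 x + ψ0 x)/2))) := fun x _ => by
      rw [heq2 x]; ring
    have i23 : IntegrableOn (fun x =>
        (φ1 x - φ0 x) * ((3/2 * φ0 x - 1/2 * φm x) * ((U1 x + U0 x)/2))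
          + (φ1 x - φ0 x) * (α * ((ψ1 x + ψ0 x)/2))) (Box d) :=
      (integrableOn_box hI2c).add (integrableOn_box hI3c)
    rw [setIntegral_congr_fun hB hpt, integral_add (integrableOn_box hI1c) i23,
      integral_add (integrableOn_box hI2c) (integrableOn_box hI3c)]
  -- the ε²-term
  have hT1 : ∫ x in Box d, (φ1 x - φ0 x) * (-ε^2 * lap (fun y => (φ1 y + φ0 y)/2) x)
      = ε^2/2 * ((∫ x in Box d, ∑ i, (fderiv ℝ φ1 x (uvec d i))^2)
          - ∫ x in Box d, ∑ i, (fderiv ℝ φ0 x (uvec d i))^2) := by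
    have e1 : ∫ x in Box d, (φ1 x - φ0 x) * (-ε^2 * lap (fun y => (φ1 y + φ0 y)/2) x)
        = (-ε^2) * ∫ x in Box d, (φ1 x - φ0 x) * lap (fun y => (φ1 y + φ0 y)/2) x := by
      rw [← integral_const_mul]
      exact setIntegral_congr_fun hB (fun x _ => by ring)
    have e2 := ibp hd0 hdms hgavs hdmp hgavp
    have e3 : ∫ x in Box d, ∑ i, fderiv ℝ (fun y => φ1 y - φ0 y) x (uvec d i)
          * fderiv ℝ (fun y => (φ1 y + φ0 y)/2) x (uvec d i)
        = ∫ x in Box d, ((∑ i, (fderiv ℝ φ1 x (uvec d i))^2)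
            - (∑ i, (fderiv ℝ φ0 x (uvec d i))^2))/2 := by
      refine setIntegral_congr_fun hB (fun x _ => ?_)
      have hterm : ∀ i : Fin d, fderiv ℝ (fun y => φ1 y - φ0 y) x (uvec d i)
            * fderiv ℝ (fun y => (φ1 y + φ0 y)/2) x (uvec d i)
          = ((fderiv ℝ φ1 x (uvec d i))^2 - (fderiv ℝ φ0 x (uvec d i))^2)/2 := fun i => by
        rw [fderiv_sub_apply hφ1s hφ0s, fderiv_avg_apply hφ1s hφ0s]; ring
      rw [Finset.sum_congr rfl (fun i _ => hterm i), ← Finset.sum_div,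
        Finset.sum_sub_distrib]
    rw [e1, e2, e3, integral_div,
      integral_sub (integrableOn_box (gradsq_continuous hφ1s))
        (integrableOn_box (gradsq_continuous hφ0s))]
    ring
  -- the U-term
  have hT2 : ∫ x in Box d, (φ1 x - φ0 x) * ((3/2 * φ0 x - 1/2 * φm x) * ((U1 x + U0 x)/2))
      = 1/4 * ((∫ x in Box d, (U1 x)^2) - ∫ x in Box d, (U0 x)^2) := by
    have e0 : ∀ x : Eu d, (φ1 x - φ0 x) * ((3/2 * φ0 x - 1/2 * φm x) * ((U1 x + U0 x)/2))
        = ((U1 x)^2 - (U0 x)^2)/4 := fun x => by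
      linear_combination (-(U1 x + U0 x)/4) * (heq3 x)
    rw [setIntegral_congr_fun hB (fun x _ => e0 x), integral_div,
      integral_sub (integrableOn_box (f := fun x => U1 x ^ 2) (cU1.pow 2))
        (integrableOn_box (f := fun x => U0 x ^ 2) (cU0.pow 2))]
    ring
  -- the α-term
  have hT3 : ∫ x in Box d, (φ1 x - φ0 x) * (α * ((ψ1 x + ψ0 x)/2))
      = α/2 * ((∫ x in Box d, ∑ i, (fderiv ℝ ψ1 x (uvec d i))^2)
          - ∫ x in Box d, ∑ i, (fderiv ℝ ψ0 x (uvec d i))^2) := by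
    have hmean : ∫ x in Box d, (ψ1 x + ψ0 x)/2 = 0 := by
      rw [integral_div, integral_add (integrableOn_box cψ1) (integrableOn_box cψ0),
        hψmean0, hψmean1]
      norm_num
    have e0 : ∀ x : Eu d, (φ1 x - φ0 x) * (α * ((ψ1 x + ψ0 x)/2))
        = α * ((ψ1 x + ψ0 x)/2 * lap ψ0 x) - α * ((ψ1 x + ψ0 x)/2 * lap ψ1 x)
          + (α * (avg φ1 - avg φ0)) * ((ψ1 x + ψ0 x)/2) := fun x => by
      linear_combination (-(α * ((ψ1 x + ψ0 x)/2))) * (hψeq1 x)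
        + (α * ((ψ1 x + ψ0 x)/2)) * (hψeq0 x)
    have c1 : Continuous (fun x => α * ((ψ1 x + ψ0 x)/2 * lap ψ0 x)) :=
      continuous_const.mul (((cψ1.add cψ0).div_const 2).mul (lap_continuous hψ0s))
    have c2 : Continuous (fun x => α * ((ψ1 x + ψ0 x)/2 * lap ψ1 x)) :=
      continuous_const.mul (((cψ1.add cψ0).div_const 2).mul (lap_continuous hψ1s))
    have c3 : Continuous (fun x => (α * (avg φ1 - avg φ0)) * ((ψ1 x + ψ0 x)/2)) :=
      continuous_const.mul ((cψ1.add cψ0).div_const 2)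
    have i12 : IntegrableOn (fun x => α * ((ψ1 x + ψ0 x)/2 * lap ψ0 x)
        - α * ((ψ1 x + ψ0 x)/2 * lap ψ1 x)) (Box d) :=
      (integrableOn_box c1).sub (integrableOn_box c2)
    rw [setIntegral_congr_fun hB (fun x _ => e0 x),
      integral_add i12 (integrableOn_box c3),
      integral_sub (integrableOn_box c1) (integrableOn_box c2),
      integral_const_mul, integral_const_mul, integral_const_mul, hmean,
      ibp hd0 hψas hψ0s hψap hψ0p, ibp hd0 hψas hψ1s hψap hψ1p]
    have e1 : ∀ g : Eu d → ℝ, ContDiff ℝ (⊤ : ℕ∞) g →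
        (∫ x in Box d, ∑ i, fderiv ℝ (fun y => (ψ1 y + ψ0 y)/2) x (uvec d i)
            * fderiv ℝ g x (uvec d i))
          = ∫ x in Box d, ∑ i, (fderiv ℝ ψ1 x (uvec d i) + fderiv ℝ ψ0 x (uvec d i))/2
            * fderiv ℝ g x (uvec d i) := fun g _ =>
      setIntegral_congr_fun hB (fun x _ =>
        Finset.sum_congr rfl (fun i _ => by rw [fderiv_avg_apply hψ1s hψ0s]))
    rw [e1 ψ0 hψ0s, e1 ψ1 hψ1s]
    have cS : ∀ {g : Eu d → ℝ}, ContDiff ℝ (⊤ : ℕ∞) g → Continuous (fun x =>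
        ∑ i, (fderiv ℝ ψ1 x (uvec d i) + fderiv ℝ ψ0 x (uvec d i))/2
          * fderiv ℝ g x (uvec d i)) := fun {g} hg =>
      continuous_finset_sum _ fun i _ =>
        ((((pderiv_smooth hψ1s i).continuous).add
          ((pderiv_smooth hψ0s i).continuous)).div_const 2).mul
          ((pderiv_smooth hg i).continuous)
    have e2 : (∫ x in Box d, ∑ i, (fderiv ℝ ψ1 x (uvec d i) + fderiv ℝ ψ0 x (uvec d i))/2
            * fderiv ℝ ψ1 x (uvec d i))
          - (∫ x in Box d, ∑ i, (fderiv ℝ ψ1 x (uvec d i) + fderiv ℝ ψ0 x (uvec d i))/2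
            * fderiv ℝ ψ0 x (uvec d i))
        = ((∫ x in Box d, ∑ i, (fderiv ℝ ψ1 x (uvec d i))^2)
            - ∫ x in Box d, ∑ i, (fderiv ℝ ψ0 x (uvec d i))^2)/2 := by
      rw [← integral_sub (integrableOn_box (cS hψ1s)) (integrableOn_box (cS hψ0s)),
        ← integral_sub (integrableOn_box (gradsq_continuous hψ1s))
          (integrableOn_box (gradsq_continuous hψ0s)), ← integral_div]
      refine setIntegral_congr_fun hB (fun x _ => ?_)
      rw [← Finset.sum_sub_distrib, ← Finset.sum_sub_distrib, Finset.sum_div]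
      exact Finset.sum_congr rfl fun i _ => by ring
    linear_combination α * e2
  -- Conclusion
  have hEd : Edisc ε α φ1 U1 ψ1 - Edisc ε α φ0 U0 ψ0
      = ∫ x in Box d, (φ1 x - φ0 x) * w x := by
    rw [hsplit, hT1, hT2, hT3]
    simp only [Edisc, grad_normsq]
    ring
  linarith [hAle, hEd]


end PFBCP
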